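/- arXiv:2312.14835 — 2 statements merged into one kernel-verified Lean document; each statement's English description precedes it below -/
import Mathlib

section
/- Let Γ be a finite connected 3-GNDB graph of diameter 2. Then there exists a positive integer n such that Γ is isomorphic to the complete bipartite graph K_{n,3n}. -/
/-!
In a graph of diameter at most 2, for an edge `ab` one has `W_ab = {a} ∪ (N(a) \ N[b])`, so
`|W_ab| = deg a - λ(a, b)` with `λ(a, b)` the number of common neighbours. If the sizes
of `W_ab` and `W_ba` are always `γ` and `δ ≠ γ` (here `δ = 3γ`), the degrees at the ends of
every edge therefore differ by exactly `|δ - γ| ≠ 0`, which rules out triangles; so `λ = 0`,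
every degree is `γ` or `δ`, and adjacent vertices have different degrees. Two non-adjacent
vertices of different degrees would have a common neighbour whose degree differs from both, so
adjacency means "different degree": the graph is complete bipartite between the two degree
classes, and a vertex of degree `γ` is adjacent to the whole class of degree `δ`, which therefore
has `γ` elements.
-/

/-- The set of vertices closer to `a` than to `b`. -/
def closerSet {V : Type*} (G : SimpleGraph V) (a b : V) : Set V :=
  {x | G.dist x a < G.dist x b}

namespace SimpleGraph

variable {V : Type*} {G : SimpleGraph V} {a b u v : V} {γ δ : ℕ}

open Classical in
lemma dist_eq_of_ediam_le_two (hdiam : G.ediam ≤ 2) (u v : V) :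
    G.dist u v = if u = v then 0 else if G.Adj u v then 1 else 2 := by
  have hle : G.edist u v ≤ 2 := edist_le_ediam.trans hdiam
  have hreach : G.Reachable u v :=
    edist_ne_top_iff_reachable.mp (ne_top_of_le_ne_top (by decide) hle)
  have hdist : G.dist u v ≤ 2 := ENat.toNat_le_of_le_natCast hle
  split_ifs with huv hadj
  · exact huv ▸ dist_self
  · exact dist_eq_one_iff_adj.mpr hadj
  · have h0 : G.dist u v ≠ 0 := dist_ne_zero_iff_ne_and_reachable.mpr ⟨huv, hreach⟩
    have h1 : G.dist u v ≠ 1 := mt dist_eq_one_iff_adj.mp hadj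
    omega

lemma commonNeighbors_nonempty_of_ediam_le_two (hdiam : G.ediam ≤ 2) (hne : u ≠ v)
    (hnadj : ¬ G.Adj u v) : (G.commonNeighbors u v).Nonempty :=
  Set.nonempty_iff_ne_empty.mpr fun h ↦
    (edist_le_ediam.trans hdiam).not_gt (two_lt_edist_iff.mpr ⟨hne, hnadj, h⟩)

lemma exists_adj_of_ediam_le_two [Nontrivial V] (hdiam : G.ediam ≤ 2) (v : V) :
    ∃ u, G.Adj v u :=
  (connected_of_ediam_ne_top (ne_top_of_le_ne_top (by decide) hdiam)).preconnected
    |>.exists_adj_of_nontrivial v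

lemma closerSet_eq_of_ediam_le_two (hdiam : G.ediam ≤ 2) (hab : G.Adj a b) :
    closerSet G a b = insert a (G.neighborSet a \ insert b (G.neighborSet b)) := by
  ext x
  simp only [closerSet, Set.mem_ofPred_eq, dist_eq_of_ediam_le_two hdiam, Set.mem_insert_iff,
    Set.mem_sdiff, mem_neighborSet]
  grind [Adj.ne, Adj.symm]

lemma ncard_closerSet_add_ncard_commonNeighbors [Finite V] (hdiam : G.ediam ≤ 2)
    (hab : G.Adj a b) :
    (closerSet G a b).ncard + (G.commonNeighbors a b).ncard = (G.neighborSet a).ncard := by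
  have hinter :
      G.neighborSet a ∩ insert b (G.neighborSet b) = insert b (G.commonNeighbors a b) :=
    Set.inter_insert_of_mem (s := G.neighborSet a) hab
  have hsplit :=
    Set.ncard_inter_add_ncard_sdiff_eq_ncard (G.neighborSet a) (insert b (G.neighborSet b))
  rw [hinter, Set.ncard_insert_of_notMem (fun h ↦ G.irrefl h.2)] at hsplit
  rw [closerSet_eq_of_ediam_le_two hdiam hab, Set.ncard_insert_of_notMem (fun h ↦ G.irrefl h.1)]
  omega

/-- A `k`-GNDB graph with parameter `γ` in the sense of the paper is `IsGNDBWith G γ (k * γ)`. -/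
def IsGNDBWith (G : SimpleGraph V) (γ δ : ℕ) : Prop :=
  ∀ a b, G.Adj a b → ({(closerSet G a b).ncard, (closerSet G b a).ncard} : Set ℕ) = {γ, δ}

section GNDB

variable [Finite V]

lemma IsGNDBWith.ncard_neighborSet_eq_add_of_adj (hG : G.IsGNDBWith γ δ)
    (hdiam : G.ediam ≤ 2) (hab : G.Adj a b) :
    (G.neighborSet a).ncard = γ + (G.commonNeighbors a b).ncard ∧
        (G.neighborSet b).ncard = δ + (G.commonNeighbors a b).ncard ∨
      (G.neighborSet a).ncard = δ + (G.commonNeighbors a b).ncard ∧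
        (G.neighborSet b).ncard = γ + (G.commonNeighbors a b).ncard := by
  have hab' := ncard_closerSet_add_ncard_commonNeighbors hdiam hab
  have hba := ncard_closerSet_add_ncard_commonNeighbors hdiam hab.symm
  rw [commonNeighbors_symm] at hba
  have hpair := Set.pair_eq_pair_iff.mp (hG a b hab)
  omega

lemma IsGNDBWith.commonNeighbors_eq_empty (hG : G.IsGNDBWith γ δ) (hdiam : G.ediam ≤ 2)
    (hγδ : γ ≠ δ) (hab : G.Adj a b) : G.commonNeighbors a b = ∅ := by
  refine Set.eq_empty_of_forall_notMem fun c ⟨hac, hbc⟩ ↦ ?_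
  -- Along each edge the degrees differ by `|δ - γ| ≠ 0`, which cannot happen around a triangle.
  have h₁ := hG.ncard_neighborSet_eq_add_of_adj hdiam hab
  have h₂ := hG.ncard_neighborSet_eq_add_of_adj hdiam hbc
  have h₃ := hG.ncard_neighborSet_eq_add_of_adj hdiam hac
  omega

lemma IsGNDBWith.ncard_neighborSet_eq_of_adj (hG : G.IsGNDBWith γ δ) (hdiam : G.ediam ≤ 2)
    (hγδ : γ ≠ δ) (hab : G.Adj a b) :
    (G.neighborSet a).ncard = γ ∧ (G.neighborSet b).ncard = δ ∨
      (G.neighborSet a).ncard = δ ∧ (G.neighborSet b).ncard = γ := by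
  simpa [hG.commonNeighbors_eq_empty hdiam hγδ hab] using
    hG.ncard_neighborSet_eq_add_of_adj hdiam hab

lemma IsGNDBWith.ncard_neighborSet_eq_or [Nontrivial V] (hG : G.IsGNDBWith γ δ)
    (hdiam : G.ediam ≤ 2) (hγδ : γ ≠ δ) (v : V) :
    (G.neighborSet v).ncard = γ ∨ (G.neighborSet v).ncard = δ := by
  obtain ⟨u, hvu⟩ := exists_adj_of_ediam_le_two hdiam v
  have := hG.ncard_neighborSet_eq_of_adj hdiam hγδ hvu
  omega

lemma IsGNDBWith.adj_iff_ncard_neighborSet_ne (hG : G.IsGNDBWith γ δ) (hdiam : G.ediam ≤ 2)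
    (hγδ : γ ≠ δ) : G.Adj a b ↔ (G.neighborSet a).ncard ≠ (G.neighborSet b).ncard := by
  refine ⟨fun hab ↦ by have := hG.ncard_neighborSet_eq_of_adj hdiam hγδ hab; omega,
    fun hne ↦ ?_⟩
  by_contra hnadj
  obtain ⟨c, hac, hbc⟩ :=
    commonNeighbors_nonempty_of_ediam_le_two hdiam (by rintro rfl; exact hne rfl) hnadj
  have := hG.ncard_neighborSet_eq_of_adj hdiam hγδ hac
  have := hG.ncard_neighborSet_eq_of_adj hdiam hγδ hbc
  omega

end GNDB

def isoCompleteBipartiteGraphOfAdjIff (p : V → Prop) [DecidablePred p]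
    (h : ∀ a b, G.Adj a b ↔ (p a ↔ ¬ p b)) :
    G ≃g completeBipartiteGraph {v // p v} {v // ¬ p v} :=
  RelIso.symm
    { toEquiv := Equiv.sumCompl p
      map_rel_iff' := by
        rintro (⟨a, ha⟩ | ⟨a, ha⟩) (⟨b, hb⟩ | ⟨b, hb⟩) <;> simp [h, ha, hb] }

theorem IsGNDBWith.nonempty_iso_completeBipartiteGraph [Finite V] [Nontrivial V]
    (hG : G.IsGNDBWith γ δ) (hdiam : G.ediam ≤ 2) (hγδ : γ ≠ δ) :
    Nonempty (G ≃g completeBipartiteGraph (Fin γ) (Fin δ)) := by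
  classical
  have hdeg := hG.ncard_neighborSet_eq_or hdiam hγδ
  have hadj a b := hG.adj_iff_ncard_neighborSet_ne (a := a) (b := b) hdiam hγδ
  obtain ⟨a, b, ha, hb⟩ :
      ∃ a b, (G.neighborSet a).ncard = δ ∧ (G.neighborSet b).ncard = γ := by
    obtain ⟨v⟩ := (inferInstance : Nonempty V)
    obtain ⟨u, hvu⟩ := exists_adj_of_ediam_le_two hdiam v
    rcases hG.ncard_neighborSet_eq_of_adj hdiam hγδ hvu with h | h
    exacts [⟨u, v, h.2, h.1⟩, ⟨v, u, h.1, h.2⟩]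
  let p v := (G.neighborSet v).ncard = δ
  have hpart u v : G.Adj u v ↔ (p u ↔ ¬ p v) := by
    have := hdeg u; have := hdeg v; rw [hadj]; omega
  have hcardA : Nat.card {v // p v} = γ := by
    have : {v | p v} = G.neighborSet b := by
      ext v; have := hdeg v; simp only [Set.mem_ofPred_eq, mem_neighborSet, hadj, p]; omega
    rw [← hb, ← this]; rfl
  have hcardB : Nat.card {v // ¬ p v} = δ := by
    have : {v | ¬ p v} = G.neighborSet a := by
      ext v; have := hdeg v; simp only [Set.mem_ofPred_eq, mem_neighborSet, hadj, p]; omega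
    rw [← ha, ← this]; rfl
  exact ⟨(isoCompleteBipartiteGraphOfAdjIff p hpart).trans <| completeBipartiteGraphCongr
    (Finite.equivFinOfCardEq hcardA) (Finite.equivFinOfCardEq hcardB)⟩

end SimpleGraph

open SimpleGraph

theorem stmt_2_general {V : Type*} [Fintype V] (G : SimpleGraph V)
    (hGNDB : ∃ γ : ℕ, 0 < γ ∧ ∀ a b : V, G.Adj a b →
      ({(closerSet G a b).ncard, (closerSet G b a).ncard} : Set ℕ) = {γ, 3 * γ})
    (hdiam : G.diam = 2) :
    ∃ n : ℕ, 0 < n ∧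
      Nonempty (G ≃g completeBipartiteGraph (Fin n) (Fin (3 * n))) := by
  obtain ⟨γ, hγ, hG⟩ := hGNDB
  have : Nontrivial V := G.nontrivial_of_diam_ne_zero (by omega)
  have hediam : G.ediam ≤ 2 := by
    rw [← ENat.natCast_toNat (G.ediam_ne_top_of_diam_ne_zero (by omega))]
    exact_mod_cast hdiam.le
  exact ⟨γ, hγ, IsGNDBWith.nonempty_iso_completeBipartiteGraph hG hediam (by omega)⟩

/-- Let `Γ` be a finite connected 3-GNDB graph of diameter 2. Then there exists a
positive integer `n` such that `Γ` is isomorphic to `K_{n,3n}`. -/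
theorem stmt_2 {V : Type*} [Fintype V] (G : SimpleGraph V) (hconn : G.Connected)
    (hGNDB : ∃ γ : ℕ, 0 < γ ∧ ∀ a b : V, G.Adj a b →
      ({(closerSet G a b).ncard, (closerSet G b a).ncard} : Set ℕ) = {γ, 3 * γ})
    (hdiam : G.diam = 2) :
    ∃ n : ℕ, 0 < n ∧
      Nonempty (G ≃g completeBipartiteGraph (Fin n) (Fin (3 * n))) :=
  stmt_2_general G hGNDB hdiam
end

section
/- Let Γ be a finite connected 3-GNDB graph with parameter γ and at least one edge. Then the number of vertices of Γ is exactly 4γ. -/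
namespace SimpleGraph

open Finset

variable {V : Type*} {G : SimpleGraph V}

theorem ncard_closerSet [Fintype V] (a b : V) :
    (closerSet G a b).ncard = #{x | G.dist x a < G.dist x b} := by
  rw [closerSet, Set.ncard_eq_toFinset_card', Set.toFinset_ofPred]

noncomputable def transmission (G : SimpleGraph V) [Fintype V] (a : V) : ℤ :=
  ∑ x, (G.dist x a : ℤ)

theorem Adj.transmission_sub_transmission [Fintype V] {a b : V} (hab : G.Adj a b) :
    G.transmission b - G.transmission a =
      ((closerSet G a b).ncard : ℤ) - (closerSet G b a).ncard := by
  have hstep : ∀ x, (G.dist x b : ℤ) - G.dist x a =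
      (if G.dist x a < G.dist x b then 1 else 0) -
        (if G.dist x b < G.dist x a then 1 else 0) := by
    intro x
    rcases hab.diff_dist_adj (u := x) with h | h | h <;> split_ifs <;> omega
  rw [transmission, transmission, ← sum_sub_distrib, sum_congr rfl fun x _ ↦ hstep x,
    sum_sub_distrib, sum_boole, sum_boole, ncard_closerSet, ncard_closerSet]

theorem Walk.modEq_add_mul_length {f : V → ℤ} {m : ℤ}
    (hf : ∀ a b, G.Adj a b → f b ≡ f a + m [ZMOD 2 * m]) {x a : V} (w : G.Walk x a) :
    f a ≡ f x + m * w.length [ZMOD 2 * m] := by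
  induction w with
  | nil => simp
  | @cons u v c h p ih =>
    calc f c ≡ f v + m * p.length [ZMOD 2 * m] := ih
      _ ≡ f u + m + m * p.length [ZMOD 2 * m] := (hf u v h).add_right _
      _ = f u + m * (cons h p).length := by rw [Walk.length_cons]; push_cast; ring

theorem Connected.dist_ne_of_adj_of_modEq (hG : G.Connected) {f : V → ℤ} {m : ℤ}
    (hm : m ≠ 0) (hf : ∀ a b, G.Adj a b → f b ≡ f a + m [ZMOD 2 * m]) {a b : V}
    (hab : G.Adj a b) (x : V) :
    G.dist x a ≠ G.dist x b := by
  intro hdist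
  have hdistMod : ∀ y, f y ≡ f x + m * G.dist x y [ZMOD 2 * m] := fun y ↦ by
    obtain ⟨w, hw⟩ := (hG x y).exists_walk_length_eq_dist
    exact hw ▸ w.modEq_add_mul_length hf
  have hfab : f b ≡ f a [ZMOD 2 * m] := by
    have hb := hdistMod b
    rw [← hdist] at hb
    exact hb.trans (hdistMod a).symm
  have hzero : f a + 0 ≡ f a + m [ZMOD 2 * m] := by simpa using hfab.symm.trans (hf a b hab)
  have hdvd : 2 * m ∣ m := by simpa using (Int.ModEq.add_left_cancel' (f a) hzero).dvd
  exact hm (Int.eq_zero_of_dvd_of_natAbs_lt_natAbs hdvd (by omega))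

theorem ncard_closerSet_add_ncard_closerSet [Fintype V] {a b : V}
    (h : ∀ x, G.dist x a ≠ G.dist x b) :
    (closerSet G a b).ncard + (closerSet G b a).ncard = Fintype.card V := by
  have hcompl : filter (fun x ↦ G.dist x b < G.dist x a) univ =
      filter (fun x ↦ ¬G.dist x a < G.dist x b) univ := by
    ext x
    have := h x
    simp only [mem_filter, mem_univ, true_and]
    omega
  rw [ncard_closerSet, ncard_closerSet, hcompl, card_filter_add_card_filter_not,
    card_univ]

end SimpleGraph

theorem Int.sub_modEq_of_pair_eq_pair {p q γ : ℕ}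
    (h : ({p, q} : Set ℕ) = {γ, 3 * γ}) : (p : ℤ) - q ≡ 2 * γ [ZMOD 2 * (2 * γ)] := by
  rw [Int.modEq_iff_dvd]
  rcases Set.pair_eq_pair_iff.mp h with ⟨rfl, rfl⟩ | ⟨rfl, rfl⟩
  · exact ⟨1, by push_cast; ring⟩
  · exact ⟨0, by push_cast; ring⟩

/-- Let `Γ` be a finite connected 3-GNDB graph with parameter `γ` and at least one edge.
Then the number of vertices of `Γ` is exactly `4γ`. -/
theorem stmt_10 {V : Type*} [Fintype V] (G : SimpleGraph V) (hconn : G.Connected)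
    (hedge : ∃ a b : V, G.Adj a b) (γ : ℕ) (hγ : 0 < γ)
    (hGNDB : ∀ a b : V, G.Adj a b →
      ({(closerSet G a b).ncard, (closerSet G b a).ncard} : Set ℕ) = {γ, 3 * γ}) :
    Fintype.card V = 4 * γ := by
  obtain ⟨a, b, hab⟩ := hedge
  have hstep : ∀ a b, G.Adj a b →
      G.transmission b ≡ G.transmission a + 2 * γ [ZMOD 2 * (2 * γ)] := fun a b h ↦ by
    have := (Int.sub_modEq_of_pair_eq_pair (hGNDB a b h)).add_right (G.transmission a)
    rwa [← h.transmission_sub_transmission, sub_add_cancel, add_comm] at this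
  have hcard := SimpleGraph.ncard_closerSet_add_ncard_closerSet
    (hconn.dist_ne_of_adj_of_modEq (by omega) hstep hab)
  rcases Set.pair_eq_pair_iff.mp (hGNDB a b hab) with ⟨h1, h2⟩ | ⟨h1, h2⟩ <;> omega
end
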